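/- arXiv:2408.01647 — 4 statements merged into one kernel-verified Lean document; each statement's English description precedes it below -/
import Mathlib

section
/- Let (M,g,∇) be a statistical manifold with skewness tensor K, Levi-Civita connection ∇^g, and curvature tensors R, R* of ∇ and its conjugate ∇*. Then R*(X,Y)Z − R(X,Y)Z = (∇^g_X K)(Y,Z) − (∇^g_Y K)(X,Z) for all vector fields X,Y,Z. Consequently R = R* (conjugate symmetry) if and only if ∇^g K is totally symmetric. -/
/-- Curvature tensor of a connection: R(X,Y)Z = ∇_X∇_Y Z − ∇_Y∇_X Z − ∇_{[X,Y]}Z. -/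
def curv {V : Type*} [LieRing V] (nab : V → V → V) (X Y Z : V) : V :=
  nab X (nab Y Z) - nab Y (nab X Z) - nab ⁅X, Y⁆ Z

/-- R*(X,Y)Z − R(X,Y)Z = (∇^g_X K)(Y,Z) − (∇^g_Y K)(X,Z); hence
R = R* (conjugate symmetry) iff ∇^g K is totally symmetric.
Here ∇ = ∇^g − K/2 and ∇* = ∇^g + K/2, with
(∇^g K)(X;Y,Z) = ∇^g_X(K(Y)Z) − K(∇^g_X Y)Z − K(Y)(∇^g_X Z). -/
theorem statement5
    (V : Type*) [LieRing V] [LieAlgebra ℝ V]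
    (lc K : V → V → V)
    -- lc is the Levi-Civita connection: torsion free, ℝ-linear in each slot
    (h_lc_tf : ∀ X Y, lc X Y - lc Y X = ⁅X, Y⁆)
    (h_lc_lin : ∀ X, IsLinearMap ℝ (lc X))
    -- K is the skewness tensor: symmetric, ℝ-bilinear
    (hK_symm : ∀ X Y, K X Y = K Y X)
    (hK_lin2 : ∀ X, IsLinearMap ℝ (K X))
    (hK_lin1 : ∀ Y, IsLinearMap ℝ (fun X => K X Y))
    -- ∇ = ∇^g − K/2 and the conjugate ∇* = ∇^g + K/2
    (nabla nablaStar : V → V → V)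
    (h_nabla : ∀ X Y, nabla X Y = lc X Y - (1/2 : ℝ) • K X Y)
    (h_nablaStar : ∀ X Y, nablaStar X Y = lc X Y + (1/2 : ℝ) • K X Y) :
    -- R* − R is the alternation of ∇^g K
    (∀ X Y Z,
      curv nablaStar X Y Z - curv nabla X Y Z
        = (lc X (K Y Z) - K (lc X Y) Z - K Y (lc X Z))
          - (lc Y (K X Z) - K (lc Y X) Z - K X (lc Y Z))) ∧
    -- R = R* iff ∇^g K is totally symmetric
    ((∀ X Y Z, curv nabla X Y Z = curv nablaStar X Y Z)
      ↔ (∀ X Y Z,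
          lc X (K Y Z) - K (lc X Y) Z - K Y (lc X Z)
            = lc Y (K X Z) - K (lc Y X) Z - K X (lc Y Z))) := by

  have lcsub : ∀ X A B, lc X (A - B) = lc X A - lc X B := fun X A B => (h_lc_lin X).map_sub A B
  have lcadd : ∀ X A B, lc X (A + B) = lc X A + lc X B := fun X A B => (h_lc_lin X).map_add A B
  have lcsmul : ∀ X (c : ℝ) A, lc X (c • A) = c • lc X A := fun X c A => (h_lc_lin X).map_smul c A
  have Ksub2 : ∀ X A B, K X (A - B) = K X A - K X B := fun X A B => (hK_lin2 X).map_sub A B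
  have Kadd2 : ∀ X A B, K X (A + B) = K X A + K X B := fun X A B => (hK_lin2 X).map_add A B
  have Ksmul2 : ∀ X (c : ℝ) A, K X (c • A) = c • K X A := fun X c A => (hK_lin2 X).map_smul c A
  have Ksub1 : ∀ A B Z, K (A - B) Z = K A Z - K B Z := fun A B Z => (hK_lin1 Z).map_sub A B
  have main : ∀ X Y Z,
      curv nablaStar X Y Z - curv nabla X Y Z
        = (lc X (K Y Z) - K (lc X Y) Z - K Y (lc X Z))
          - (lc Y (K X Z) - K (lc Y X) Z - K X (lc Y Z)) := by
    intro X Y Z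
    have hb : ⁅X, Y⁆ = lc X Y - lc Y X := (h_lc_tf X Y).symm
    simp only [curv, h_nabla, h_nablaStar, hb, lcsub, lcadd, lcsmul, Ksub2, Kadd2, Ksmul2,
      Ksub1, smul_sub, smul_add]
    module
  refine ⟨main, ?_, ?_⟩
  · intro h X Y Z
    have h0 := main X Y Z
    rw [h X Y Z, sub_self] at h0
    exact (sub_eq_zero.mp h0.symm)
  · intro h X Y Z
    have h0 := main X Y Z
    rw [h X Y Z, sub_self] at h0
    exact (sub_eq_zero.mp h0).symm
end

section
/- Let G be a Lie group with left-invariant metric g induced by an inner product ⟨·,·⟩ on 𝔤, and let ∇ be a left-invariant torsion-free connection determined by the bilinear map μ (so ∇_X Y = (sym μ)(X,Y) + (1/2)[X,Y] on 𝔤). Then (g,∇) is a statistical structure (i.e. ∇g is totally symmetric) if and only if ⟨U(Y,Z),X⟩ − ⟨U(X,Z),Y⟩ = ⟨(sym μ)(Y,Z),X⟩ − ⟨(sym μ)(X,Z),Y⟩ for all X,Y,Z ∈ 𝔤, where U is given by 2⟨U(X,Y),Z⟩ = ⟨X,[Z,Y]⟩ + ⟨Y,[Z,X]⟩. -/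
/-- For a left-invariant metric B and a left-invariant torsion-free
connection with ∇_X Y = (sym μ)(X,Y) + (1/2)[X,Y], the pair (g,∇) is a
statistical structure (∇g totally symmetric) iff
⟨U(Y,Z),X⟩ − ⟨U(X,Z),Y⟩ = ⟨ν(Y,Z),X⟩ − ⟨ν(X,Z),Y⟩, where ν = sym μ and
2⟨U(X,Y),Z⟩ = ⟨X,[Z,Y]⟩ + ⟨Y,[Z,X]⟩.
Here (∇_X g)(Y,Z) = −⟨μ(X,Y),Z⟩ − ⟨Y,μ(X,Z)⟩ on left-invariant fields. -/
theorem statement12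
    (L : Type*) [LieRing L] [LieAlgebra ℝ L]
    (B : L → L → ℝ)
    (hB_symm : ∀ X Y, B X Y = B Y X)
    (hB_lin : ∀ X, IsLinearMap ℝ (B X))
    (hB_nondeg : ∀ X, (∀ Y, B X Y = 0) → X = 0)
    (U : L → L → L)
    (hU : ∀ X Y Z, 2 * B (U X Y) Z = B X ⁅Z, Y⁆ + B Y ⁅Z, X⁆)
    -- ν = sym μ is the symmetric part of μ; torsion-freeness of ∇^μ means
    -- μ(X,Y) = ν(X,Y) + (1/2)[X,Y]
    (ν : L → L → L)
    (hν_symm : ∀ X Y, ν X Y = ν Y X)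
    (μ : L → L → L)
    (hμ : ∀ X Y, μ X Y = ν X Y + (1/2 : ℝ) • ⁅X, Y⁆) :
    -- ∇g is totally symmetric ↔ the stated identity
    ((∀ X Y Z,
        (-B (μ X Y) Z - B Y (μ X Z) = -B (μ Y X) Z - B X (μ Y Z)) ∧
        (-B (μ X Y) Z - B Y (μ X Z) = -B (μ X Z) Y - B Z (μ X Y)))
      ↔ (∀ X Y Z,
          B (U Y Z) X - B (U X Z) Y = B (ν Y Z) X - B (ν X Z) Y)) := by

  have hadd2 : ∀ a b c : L, B a (b + c) = B a b + B a c := fun a b c => (hB_lin a).map_add b c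
  have hsmul2 : ∀ (r : ℝ) (a c : L), B a (r • c) = r * B a c := fun r a c => (hB_lin a).map_smul r c
  have hadd1 : ∀ a b c : L, B (a + b) c = B a c + B b c := fun a b c => by
    rw [hB_symm, hadd2, hB_symm, hB_symm c b]
  have hsmul1 : ∀ (r : ℝ) (a c : L), B (r • a) c = r * B a c := fun r a c => by
    rw [hB_symm, hsmul2, hB_symm]
  have key : ∀ X Y Z : L,
      (-B (μ X Y) Z - B Y (μ X Z) = -B (μ Y X) Z - B X (μ Y Z)) ↔
      (B (U Y Z) X - B (U X Z) Y = B (ν Y Z) X - B (ν X Z) Y) := by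
    intro X Y Z
    have e1 := hU Y Z X
    have e2 := hU X Z Y
    rw [hμ, hμ, hμ, hμ, hadd1, hadd1, hadd2, hadd2, hsmul1, hsmul1, hsmul2, hsmul2,
      hν_symm Y X]
    constructor
    · intro h
      have hs : ⁅Y, X⁆ = -⁅X, Y⁆ := (lie_skew Y X).symm
      have hn : B Z ⁅Y, X⁆ = -B Z ⁅X, Y⁆ := by
        rw [hs, IsLinearMap.map_neg (hB_lin Z)]
      have hYX : B ⁅Y, X⁆ Z = -B ⁅X, Y⁆ Z := by
        rw [hB_symm, hn, hB_symm]
      linear_combination (1/2 : ℝ) * e1 - (1/2 : ℝ) * e2 - h +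
        hB_symm (ν X Z) Y - hB_symm (ν Y Z) X - hB_symm ⁅X, Y⁆ Z -
        (1/2 : ℝ) * hn + (1/2 : ℝ) * hYX
    · intro h
      have hs : ⁅Y, X⁆ = -⁅X, Y⁆ := (lie_skew Y X).symm
      have hn : B Z ⁅Y, X⁆ = -B Z ⁅X, Y⁆ := by
        rw [hs, IsLinearMap.map_neg (hB_lin Z)]
      have hYX : B ⁅Y, X⁆ Z = -B ⁅X, Y⁆ Z := by
        rw [hB_symm, hn, hB_symm]
      linear_combination (1/2 : ℝ) * e1 - (1/2 : ℝ) * e2 - h +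
        hB_symm (ν X Z) Y - hB_symm (ν Y Z) X - hB_symm ⁅X, Y⁆ Z -
        (1/2 : ℝ) * hn + (1/2 : ℝ) * hYX
  constructor
  · intro h X Y Z
    exact (key X Y Z).mp (h X Y Z).1
  · intro h X Y Z
    refine ⟨(key X Y Z).mpr (h X Y Z), ?_⟩
    rw [hB_symm (μ X Y) Z, hB_symm Y (μ X Z)]
    ring
end

section
/- For ξ, η ∈ ℝ with (ξ,η) ≠ (0,0) and (ξ',η') ≠ (0,0), the 3-dimensional non-unimodular Lie algebras 𝔤(ξ,η) and 𝔤(ξ',η') with bases {e₁,e₂,e₃} satisfying [e₁,e₂] = (1+ξ)(e₂ + ηe₃), [e₂,e₃] = 0, [e₃,e₁] = (1−ξ)(ηe₂ − e₃) are isomorphic as Lie algebras if and only if their Milnor invariants agree: (1−ξ²)(1+η²) = (1−ξ'²)(1+η'²). -/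
/-!
On the abelian ideal `span {e₁, e₂}` the derivation `ad e₀` has trace `2` and determinant
`𝒟 = (1 - ξ²)(1 + η²)`. Unless it is scalar (`ξ = η = 0`) it has a cyclic vector `v`, and by
Cayley–Hamilton the basis `e₀, v, [e₀, v]` has structure constants depending on `𝒟` alone, so equal
invariants give isomorphic algebras. Conversely, in such a basis `tr (ad x) = 2 x₀` and
`κ(x, x) = x₀² (4 - 2𝒟)` for the Killing form `κ`; both are isomorphism invariants, so an
isomorphism sends `e₀` to an element with `x₀ = 1`, which forces the invariants to agree.
-/

open LinearMap LieAlgebra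

theorem LinearMap.map_lie_of_basis {K L L' ι : Type*} [CommRing K] [LieRing L] [LieAlgebra K L]
    [LieRing L'] [LieAlgebra K L'] (b : Module.Basis ι K L) (g : L →ₗ[K] L')
    (h : ∀ i j, g ⁅b i, b j⁆ = ⁅g (b i), g (b j)⁆) (x y : L) :
    g ⁅x, y⁆ = ⁅g x, g y⁆ := by
  have hB : (ad K L : L →ₗ[K] Module.End K L).compr₂ g =
      (ad K L' : L' →ₗ[K] Module.End K L').compl₁₂ g g :=
    LinearMap.ext_basis b b h
  exact congr($hB x y)

section MilnorBasis

variable {K L : Type*} [CommRing K] [LieRing L] [LieAlgebra K L]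

structure IsMilnorBasis (f : Module.Basis (Fin 3) K L) (D : K) : Prop where
  lie_zero_one : ⁅f 0, f 1⁆ = f 2
  lie_zero_two : ⁅f 0, f 2⁆ = (2 : K) • f 2 - D • f 1
  lie_one_two : ⁅f 1, f 2⁆ = 0

namespace IsMilnorBasis

variable {f : Module.Basis (Fin 3) K L} {D : K}

theorem toMatrix_ad (hf : IsMilnorBasis f D) (x : L) :
    toMatrix f f (ad K L x) =
      !![0, 0, 0;
         f.repr x 2 * D, 0, -(f.repr x 0 * D);
         -f.repr x 1 - 2 * f.repr x 2, f.repr x 0, 2 * f.repr x 0] := by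
  obtain ⟨h01, h02, h12⟩ := hf
  have hx : f.repr x 0 • f 0 + f.repr x 1 • f 1 + f.repr x 2 • f 2 = x := by
    simpa only [Fin.sum_univ_three] using f.sum_repr x
  have h0 : ⁅x, f 0⁆ = (f.repr x 2 * D) • f 1 + (-f.repr x 1 - 2 * f.repr x 2) • f 2 := by
    conv_lhs => rw [← hx]
    rw [add_lie, add_lie, smul_lie, smul_lie, smul_lie, lie_self, ← lie_skew (f 1), h01,
      ← lie_skew (f 2), h02]
    module
  have h1 : ⁅x, f 1⁆ = f.repr x 0 • f 2 := by
    conv_lhs => rw [← hx]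
    rw [add_lie, add_lie, smul_lie, smul_lie, smul_lie, lie_self, h01, ← lie_skew (f 2), h12]
    module
  have h2 : ⁅x, f 2⁆ = (-(f.repr x 0 * D)) • f 1 + (2 * f.repr x 0) • f 2 := by
    conv_lhs => rw [← hx]
    rw [add_lie, add_lie, smul_lie, smul_lie, smul_lie, lie_self, h02, h12]
    module
  ext i j
  rw [toMatrix_apply, ad_apply]
  fin_cases j <;> fin_cases i <;> simp [h0, h1, h2]

theorem trace_ad (hf : IsMilnorBasis f D) (x : L) : trace K L (ad K L x) = 2 * f.repr x 0 := by
  rw [trace_eq_matrix_trace K f, hf.toMatrix_ad, Matrix.trace_fin_three]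
  simp

theorem killingForm_apply_self (hf : IsMilnorBasis f D) (x : L) :
    killingForm K L x x = f.repr x 0 ^ 2 * (4 - 2 * D) := by
  rw [killingForm_apply_apply, trace_eq_matrix_trace K f, toMatrix_comp f f f,
    hf.toMatrix_ad, Matrix.trace_fin_three]
  simp only [Matrix.mul_apply, Matrix.of_apply, Matrix.cons_val', Matrix.cons_val_fin_one,
    Matrix.cons_val_zero, Matrix.cons_val_one, Matrix.cons_val, Fin.sum_univ_three]
  ring

theorem eq_of_lieEquiv [IsDomain K] [NeZero (2 : K)] {L' : Type*} [LieRing L'] [LieAlgebra K L']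
    {f' : Module.Basis (Fin 3) K L'} {D' : K} (hf : IsMilnorBasis f D) (hf' : IsMilnorBasis f' D')
    (φ : L ≃ₗ⁅K⁆ L') : D = D' := by
  have htr : 2 * f'.repr (φ (f 0)) 0 = 2 := by
    rw [← hf'.trace_ad, ← conj_ad_apply, trace_conj', hf.trace_ad]
    simp
  have h1 : f'.repr (φ (f 0)) 0 = 1 := mul_left_cancel₀ two_ne_zero (htr.trans (mul_one 2).symm)
  have hκ := killingForm_of_equiv_apply φ (f 0) (f 0)
  rw [hf.killingForm_apply_self, hf'.killingForm_apply_self, h1, f.repr_self] at hκ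
  simpa [two_ne_zero] using hκ.symm

theorem nonempty_lieEquiv {L' : Type*} [LieRing L'] [LieAlgebra K L']
    {f' : Module.Basis (Fin 3) K L'} (hf : IsMilnorBasis f D) (hf' : IsMilnorBasis f' D) :
    Nonempty (L ≃ₗ⁅K⁆ L') := by
  let g := f.equiv f' (Equiv.refl _)
  have hg : ∀ i, g (f i) = f' i := fun i => f.equiv_apply i f' _
  have hlie : ∀ i j, g ⁅f i, f j⁆ = ⁅g (f i), g (f j)⁆ := by
    obtain ⟨h01, h02, h12⟩ := hf
    obtain ⟨h01', h02', h12'⟩ := hf'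
    intro i j
    fin_cases i <;> fin_cases j <;>
      simp [hg, ← lie_skew (f 1) (f 0), ← lie_skew (f 2) (f 0), ← lie_skew (f 2) (f 1),
        ← lie_skew (f' 1) (f' 0), ← lie_skew (f' 2) (f' 0), ← lie_skew (f' 2) (f' 1),
        h01, h02, h12, h01', h02', h12']
  exact ⟨{ g with map_lie' := g.toLinearMap.map_lie_of_basis f hlie _ _ }⟩

end IsMilnorBasis

end MilnorBasis

section Family

variable {K L : Type*} [Field K] [NeZero (2 : K)] [LieRing L] [LieAlgebra K L]

theorem exists_det_cyclic_ne_zero {ξ η : K} (hne : (ξ, η) ≠ (0, 0)) :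
    ∃ α β : K, α * ((1 + ξ) * α * η + (1 - ξ) * β) - ((1 + ξ) * α - (1 - ξ) * β * η) * β ≠ 0 := by
  by_contra! h
  have hη : η = 0 := by
    have h2η : 2 * η = 0 := by linear_combination h 1 0 + h 0 1
    simpa [two_ne_zero] using h2η
  have hξ : ξ = 0 := by
    have h2ξ : 2 * ξ = 0 := by linear_combination -(h 1 1) + 2 * hη
    simpa [two_ne_zero] using h2ξ
  exact hne (by rw [hξ, hη])

theorem exists_isMilnorBasis {ξ η : K} (hne : (ξ, η) ≠ (0, 0)) {e : Module.Basis (Fin 3) K L}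
    (hb1 : ⁅e 0, e 1⁆ = (1 + ξ) • (e 1 + η • e 2))
    (hb2 : ⁅e 1, e 2⁆ = 0)
    (hb3 : ⁅e 2, e 0⁆ = (1 - ξ) • (η • e 1 - e 2)) :
    ∃ f : Module.Basis (Fin 3) K L, IsMilnorBasis f ((1 - ξ ^ 2) * (1 + η ^ 2)) := by
  obtain ⟨α, β, hdet⟩ := exists_det_cyclic_ne_zero hne
  set v := α • e 1 + β • e 2
  have h02 : ⁅e 0, e 2⁆ = -((1 - ξ) • (η • e 1 - e 2)) := by rw [← lie_skew, hb3]
  have h21 : ⁅e 2, e 1⁆ = 0 := by rw [← lie_skew, hb2, neg_zero]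
  have hw : ⁅e 0, v⁆ = ((1 + ξ) * α - (1 - ξ) * β * η) • e 1
      + ((1 + ξ) * α * η + (1 - ξ) * β) • e 2 := by
    rw [lie_add, lie_smul, lie_smul, hb1, h02]
    module
  have hunit : IsUnit (e.det ![e 0, v, ⁅e 0, v⁆]) := by
    rw [e.det_apply, hw, isUnit_iff_ne_zero]
    simpa [Matrix.det_fin_three, Module.Basis.toMatrix_apply, v] using hdet
  obtain ⟨hli, hsp⟩ := e.is_basis_iff_det.mpr hunit
  refine ⟨Module.Basis.mk hli hsp.ge, ?_, ?_, ?_⟩ <;>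
    simp only [Module.Basis.mk_apply, Matrix.cons_val_zero, Matrix.cons_val_one,
      Matrix.cons_val_two, Matrix.head_cons, Matrix.tail_cons]
  · rw [hw, lie_add, lie_smul, lie_smul, hb1, h02]
    module
  · rw [hw, lie_add, add_lie, add_lie, lie_smul, lie_smul, lie_smul, lie_smul,
      smul_lie, smul_lie, smul_lie, smul_lie, lie_self, lie_self, hb2, h21]
    simp

end Family

/-- The 3-dimensional non-unimodular Lie algebras 𝔤(ξ,η) with
basis {e₁,e₂,e₃} and brackets [e₁,e₂] = (1+ξ)(e₂+ηe₃), [e₂,e₃] = 0,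
[e₃,e₁] = (1−ξ)(ηe₂−e₃) (for (ξ,η) ≠ (0,0)) are isomorphic iff their Milnor
invariants 𝒟 = (1−ξ²)(1+η²) agree. -/
theorem statement16
    (ξ η ξ' η' : ℝ)
    (hne : (ξ, η) ≠ (0, 0)) (hne' : (ξ', η') ≠ (0, 0))
    (L L' : Type*) [LieRing L] [LieAlgebra ℝ L] [LieRing L'] [LieAlgebra ℝ L']
    (e : Module.Basis (Fin 3) ℝ L) (e' : Module.Basis (Fin 3) ℝ L')
    -- brackets of 𝔤(ξ,η)
    (hb1 : ⁅e 0, e 1⁆ = (1 + ξ) • (e 1 + η • e 2))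
    (hb2 : ⁅e 1, e 2⁆ = 0)
    (hb3 : ⁅e 2, e 0⁆ = (1 - ξ) • (η • e 1 - e 2))
    -- brackets of 𝔤(ξ',η')
    (hb1' : ⁅e' 0, e' 1⁆ = (1 + ξ') • (e' 1 + η' • e' 2))
    (hb2' : ⁅e' 1, e' 2⁆ = 0)
    (hb3' : ⁅e' 2, e' 0⁆ = (1 - ξ') • (η' • e' 1 - e' 2)) :
    Nonempty (L ≃ₗ⁅ℝ⁆ L') ↔
      (1 - ξ^2) * (1 + η^2) = (1 - ξ'^2) * (1 + η'^2) := by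
  obtain ⟨f, hf⟩ := exists_isMilnorBasis hne hb1 hb2 hb3
  obtain ⟨f', hf'⟩ := exists_isMilnorBasis hne' hb1' hb2' hb3'
  exact ⟨fun ⟨φ⟩ => hf.eq_of_lieEquiv hf' φ, fun hD => hf.nonempty_lieEquiv (hD ▸ hf')⟩
end

section
/- Let 𝔤(ξ,η) be the 3-dimensional non-unimodular Lie algebra with orthonormal basis {e₁,e₂,e₃} and brackets [e₁,e₂] = (1+ξ)(e₂ + ηe₃), [e₂,e₃] = 0, [e₃,e₁] = (1−ξ)(ηe₂ − e₃). Then for the corresponding left-invariant metric, the Ricci tensor is diagonal in this basis with Ric(e₁,e₁) = −2(1 + ξ²(1+η²)), Ric(e₂,e₂) = −2(1 + ξ(1+η²)), Ric(e₃,e₃) = −2(1 − ξ(1+η²)), and the scalar curvature is ρ = −2(3 + ξ²(1+η²)) < 0. -/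
/-- For the left-invariant metric on the non-unimodular Lie group
with Lie algebra 𝔤(ξ,η) (orthonormal basis e₀,e₁,e₂ playing the role of
e₁,e₂,e₃), the Ricci tensor is diagonal with
Ric(e₁,e₁) = −2(1+ξ²(1+η²)), Ric(e₂,e₂) = −2(1+ξ(1+η²)),
Ric(e₃,e₃) = −2(1−ξ(1+η²)), and scalar curvature ρ = −2(3+ξ²(1+η²)) < 0. -/
theorem statement17
    (L : Type*) [LieRing L] [LieAlgebra ℝ L]
    (ξ η : ℝ)
    (e : Fin 3 → L)
    (hb1 : ⁅e 0, e 1⁆ = (1 + ξ) • (e 1 + η • e 2))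
    (hb2 : ⁅e 1, e 2⁆ = 0)
    (hb3 : ⁅e 2, e 0⁆ = (1 - ξ) • (η • e 1 - e 2))
    (B : L → L → ℝ)
    (hB_symm : ∀ X Y, B X Y = B Y X)
    (hB_lin : ∀ X, IsLinearMap ℝ (B X))
    -- {e 0, e 1, e 2} is an orthonormal basis
    (h_on : ∀ i j, B (e i) (e j) = if i = j then 1 else 0)
    (h_nondeg : ∀ v, (∀ i, B v (e i) = 0) → v = 0)
    -- lc is the Levi-Civita connection on left-invariant fields
    (lc : L → L → L)
    (h_lc_tf : ∀ X Y, lc X Y - lc Y X = ⁅X, Y⁆)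
    (h_lc_metric : ∀ X Y Z, B (lc X Y) Z + B Y (lc X Z) = 0)
    -- Ricci tensor: Ric(X,Y) = tr(Z ↦ R(Z,X)Y), computed in the orthonormal frame
    (Ric : L → L → ℝ)
    (hRic : ∀ X Y, Ric X Y = ∑ i, B (curv lc (e i) X Y) (e i)) :
    -- Ric is diagonal in this basis
    (∀ i j, i ≠ j → Ric (e i) (e j) = 0) ∧
    Ric (e 0) (e 0) = -2 * (1 + ξ^2 * (1 + η^2)) ∧
    Ric (e 1) (e 1) = -2 * (1 + ξ * (1 + η^2)) ∧
    Ric (e 2) (e 2) = -2 * (1 - ξ * (1 + η^2)) ∧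
    -- scalar curvature
    (∑ i, Ric (e i) (e i)) = -2 * (3 + ξ^2 * (1 + η^2)) ∧
    (∑ i, Ric (e i) (e i)) < 0 := by

  -- bilinearity of B
  have B2a : ∀ X Y Z, B X (Y + Z) = B X Y + B X Z := fun X Y Z => (hB_lin X).map_add Y Z
  have B2s : ∀ (r : ℝ) X Y, B X (r • Y) = r * B X Y := fun r X Y => by
    simpa [smul_eq_mul] using (hB_lin X).map_smul r Y
  have B2sub : ∀ X Y Z, B X (Y - Z) = B X Y - B X Z := fun X Y Z => (hB_lin X).map_sub Y Z
  have B2n : ∀ X Y, B X (-Y) = -B X Y := fun X Y => (hB_lin X).map_neg Y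
  have B20 : ∀ X, B X 0 = 0 := fun X => (hB_lin X).map_zero
  have B1a : ∀ X Y Z, B (X + Y) Z = B X Z + B Y Z := fun X Y Z => by
    rw [hB_symm, B2a, hB_symm Z X, hB_symm Z Y]
  have B1s : ∀ (r : ℝ) X Y, B (r • X) Y = r * B X Y := fun r X Y => by
    rw [hB_symm, B2s, hB_symm]
  have B1sub : ∀ X Y Z, B (X - Y) Z = B X Z - B Y Z := fun X Y Z => by
    rw [hB_symm, B2sub, hB_symm Z X, hB_symm Z Y]
  have B1n : ∀ X Y, B (-X) Y = -B X Y := fun X Y => by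
    rw [hB_symm, B2n, hB_symm]
  have B10 : ∀ X, B 0 X = 0 := fun X => by rw [hB_symm, B20]
  -- bracket table
  have hb10 : ⁅e 1, e 0⁆ = -((1 + ξ) • (e 1 + η • e 2)) := by
    rw [← lie_skew, hb1]
  have hb21 : ⁅e 2, e 1⁆ = 0 := by rw [← lie_skew, hb2, neg_zero]
  have hb02 : ⁅e 0, e 2⁆ = -((1 - ξ) • (η • e 1 - e 2)) := by
    rw [← lie_skew, hb3]
  -- Koszul formula
  have koszul : ∀ X Y Z, B (lc X Y) Z = (B ⁅X,Y⁆ Z - B ⁅Y,Z⁆ X + B ⁅Z,X⁆ Y) / 2 := by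
    intro X Y Z
    have tf : ∀ X Y, lc X Y = lc Y X + ⁅X, Y⁆ := fun X Y => by
      have := h_lc_tf X Y; linear_combination (norm := abel) this
    have m : ∀ X Y Z, B (lc X Y) Z = - B (lc X Z) Y := fun X Y Z => by
      have := h_lc_metric X Y Z; rw [hB_symm Y (lc X Z)] at this; linarith
    have e1' : B (lc X Y) Z = B ⁅X,Y⁆ Z + B (lc Y X) Z := by
      rw [tf X Y, B1a]; ring
    have e2' : B (lc Y X) Z = - B (lc Y Z) X := m Y X Z
    have e3' : B (lc Y Z) X = B ⁅Y,Z⁆ X + B (lc Z Y) X := by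
      rw [tf Y Z, B1a]; ring
    have e4' : B (lc Z Y) X = - B (lc Z X) Y := m Z Y X
    have e5' : B (lc Z X) Y = B ⁅Z,X⁆ Y + B (lc X Z) Y := by
      rw [tf Z X, B1a]; ring
    have e6' : B (lc X Z) Y = - B (lc X Y) Z := by rw [m X Y Z]; ring
    linarith
  -- connection values
  have hv : ∀ v w : L, (∀ i, B (v - w) (e i) = 0) → v = w := fun v w h => by
    have := h_nondeg (v - w) h; exact sub_eq_zero.mp this
  have l00 : lc (e 0) (e 0) = 0 := by
    refine hv _ _ (fun i => ?_)
    fin_cases i <;>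
      simp [B1sub, koszul, hb1, hb2, hb3, hb10, hb21, hb02, lie_self,
        lie_add, add_lie, lie_smul, smul_lie, lie_sub, sub_lie,
        B1a, B1s, B2a, B2s, B2sub, B1sub, B2n, B1n, B20, B10, h_on] <;> ring
  have l01 : lc (e 0) (e 1) = η • e 2 := by
    refine hv _ _ (fun i => ?_)
    fin_cases i <;>
      simp [B1sub, koszul, hb1, hb2, hb3, hb10, hb21, hb02, lie_self,
        lie_add, add_lie, lie_smul, smul_lie, lie_sub, sub_lie,
        B1a, B1s, B2a, B2s, B2sub, B1sub, B2n, B1n, B20, B10, h_on] <;> ring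
  have l02 : lc (e 0) (e 2) = -(η • e 1) := by
    refine hv _ _ (fun i => ?_)
    fin_cases i <;>
      simp [B1sub, koszul, hb1, hb2, hb3, hb10, hb21, hb02, lie_self,
        lie_add, add_lie, lie_smul, smul_lie, lie_sub, sub_lie,
        B1a, B1s, B2a, B2s, B2sub, B1sub, B2n, B1n, B20, B10, h_on] <;> ring
  have l10 : lc (e 1) (e 0) = -((1 + ξ) • e 1) - (ξ * η) • e 2 := by
    refine hv _ _ (fun i => ?_)
    fin_cases i <;>
      simp [B1sub, koszul, hb1, hb2, hb3, hb10, hb21, hb02, lie_self,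
        lie_add, add_lie, lie_smul, smul_lie, lie_sub, sub_lie,
        B1a, B1s, B2a, B2s, B2sub, B1sub, B2n, B1n, B20, B10, h_on] <;> ring
  have l11 : lc (e 1) (e 1) = (1 + ξ) • e 0 := by
    refine hv _ _ (fun i => ?_)
    fin_cases i <;>
      simp [B1sub, koszul, hb1, hb2, hb3, hb10, hb21, hb02, lie_self,
        lie_add, add_lie, lie_smul, smul_lie, lie_sub, sub_lie,
        B1a, B1s, B2a, B2s, B2sub, B1sub, B2n, B1n, B20, B10, h_on] <;> ring
  have l12 : lc (e 1) (e 2) = (ξ * η) • e 0 := by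
    refine hv _ _ (fun i => ?_)
    fin_cases i <;>
      simp [B1sub, koszul, hb1, hb2, hb3, hb10, hb21, hb02, lie_self,
        lie_add, add_lie, lie_smul, smul_lie, lie_sub, sub_lie,
        B1a, B1s, B2a, B2s, B2sub, B1sub, B2n, B1n, B20, B10, h_on] <;> ring
  have l20 : lc (e 2) (e 0) = -((ξ * η) • e 1) - (1 - ξ) • e 2 := by
    refine hv _ _ (fun i => ?_)
    fin_cases i <;>
      simp [B1sub, koszul, hb1, hb2, hb3, hb10, hb21, hb02, lie_self,
        lie_add, add_lie, lie_smul, smul_lie, lie_sub, sub_lie,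
        B1a, B1s, B2a, B2s, B2sub, B1sub, B2n, B1n, B20, B10, h_on] <;> ring
  have l21 : lc (e 2) (e 1) = (ξ * η) • e 0 := by
    refine hv _ _ (fun i => ?_)
    fin_cases i <;>
      simp [B1sub, koszul, hb1, hb2, hb3, hb10, hb21, hb02, lie_self,
        lie_add, add_lie, lie_smul, smul_lie, lie_sub, sub_lie,
        B1a, B1s, B2a, B2s, B2sub, B1sub, B2n, B1n, B20, B10, h_on] <;> ring
  have l22 : lc (e 2) (e 2) = (1 - ξ) • e 0 := by
    refine hv _ _ (fun i => ?_)
    fin_cases i <;>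
      simp [B1sub, koszul, hb1, hb2, hb3, hb10, hb21, hb02, lie_self,
        lie_add, add_lie, lie_smul, smul_lie, lie_sub, sub_lie,
        B1a, B1s, B2a, B2s, B2sub, B1sub, B2n, B1n, B20, B10, h_on] <;> ring
  -- Ricci entries
  have ric : ∀ i j : Fin 3, Ric (e i) (e j) =
      B (curv lc (e 0) (e i) (e j)) (e 0) + B (curv lc (e 1) (e i) (e j)) (e 1)
      + B (curv lc (e 2) (e i) (e j)) (e 2) := fun i j => by
    rw [hRic, Fin.sum_univ_three]
  have R00 : Ric (e 0) (e 0) = -2 * (1 + ξ^2 * (1 + η^2)) := by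
    rw [ric]
    simp only [curv, l00, l01, l02, l10, l11, l12, l20, l21, l22]
    simp [koszul, hb1, hb2, hb3, hb10, hb21, hb02, lie_self,
      lie_add, add_lie, lie_smul, smul_lie, lie_sub, sub_lie, lie_neg, neg_lie,
      B1a, B1s, B2a, B2s, B2sub, B1sub, B2n, B1n, B20, B10, h_on, l00, l01, l02,
      l10, l11, l12, l20, l21, l22]
    ring
  have R11 : Ric (e 1) (e 1) = -2 * (1 + ξ * (1 + η^2)) := by
    rw [ric]
    simp only [curv, l00, l01, l02, l10, l11, l12, l20, l21, l22]
    simp [koszul, hb1, hb2, hb3, hb10, hb21, hb02, lie_self,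
      lie_add, add_lie, lie_smul, smul_lie, lie_sub, sub_lie, lie_neg, neg_lie,
      B1a, B1s, B2a, B2s, B2sub, B1sub, B2n, B1n, B20, B10, h_on, l00, l01, l02,
      l10, l11, l12, l20, l21, l22]
    ring
  have R22 : Ric (e 2) (e 2) = -2 * (1 - ξ * (1 + η^2)) := by
    rw [ric]
    simp only [curv, l00, l01, l02, l10, l11, l12, l20, l21, l22]
    simp [koszul, hb1, hb2, hb3, hb10, hb21, hb02, lie_self,
      lie_add, add_lie, lie_smul, smul_lie, lie_sub, sub_lie, lie_neg, neg_lie,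
      B1a, B1s, B2a, B2s, B2sub, B1sub, B2n, B1n, B20, B10, h_on, l00, l01, l02,
      l10, l11, l12, l20, l21, l22]
    ring
  have Roff : ∀ i j, i ≠ j → Ric (e i) (e j) = 0 := by
    intro i j hij
    fin_cases i <;> fin_cases j <;> first
    | exact absurd rfl hij
    | (rw [ric]
       simp only [curv, l00, l01, l02, l10, l11, l12, l20, l21, l22]
       simp [koszul, hb1, hb2, hb3, hb10, hb21, hb02, lie_self,
         lie_add, add_lie, lie_smul, smul_lie, lie_sub, sub_lie, lie_neg, neg_lie,
         B1a, B1s, B2a, B2s, B2sub, B1sub, B2n, B1n, B20, B10, h_on, l00, l01, l02,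
         l10, l11, l12, l20, l21, l22]
       try ring)
  have hsum : (∑ i, Ric (e i) (e i)) = -2 * (3 + ξ^2 * (1 + η^2)) := by
    rw [Fin.sum_univ_three, R00, R11, R22]; ring
  refine ⟨Roff, R00, R11, R22, hsum, ?_⟩
  rw [hsum]
  nlinarith [sq_nonneg ξ, sq_nonneg η, sq_nonneg (ξ*η)]
end
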